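/- Let G be the H-join of graphs G_1,…,G_p. If μ is a non-main eigenvalue of G_i with multiplicity m, then μ is an eigenvalue of G with multiplicity at least m; if μ is a main eigenvalue of G_i with multiplicity m, then μ is an eigenvalue of G with multiplicity at least m − 1. -/

import Mathlib

open Matrix

/-- The `H`-join of the family of graphs `G i`. -/
def SimpleGraph.hJoin {p : ℕ} (H : SimpleGraph (Fin p)) (n : Fin p → ℕ)
    (G : ∀ i, SimpleGraph (Fin (n i))) : SimpleGraph ((i : Fin p) × Fin (n i)) where
  Adj x y := if h : x.1 = y.1 then (G x.1).Adj x.2 (Fin.cast (congrArg n h.symm) y.2)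
             else H.Adj x.1 y.1
  symm := by
    constructor
    rintro ⟨i, a⟩ ⟨k, b⟩ hadj
    dsimp at *
    by_cases h : i = k
    · subst h
      rw [dif_pos rfl] at hadj ⊢
      simpa using ((G i).symm.symm _ _ (by simpa using hadj))
    · rw [dif_neg h] at hadj
      rw [dif_neg (Ne.symm h)]
      exact H.symm.symm _ _ hadj
  loopless := by
    constructor
    rintro ⟨i, a⟩ h
    rw [dif_pos rfl] at h
    simp at h

noncomputable instance {p : ℕ} (H : SimpleGraph (Fin p)) (n : Fin p → ℕ)
    (G : ∀ i, SimpleGraph (Fin (n i))) : DecidableRel (H.hJoin n G).Adj :=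
  Classical.decRel _

/-- `μ` is a main eigenvalue of the matrix `A`. -/
def Matrix.IsMainEig {m : ℕ} (A : Matrix (Fin m) (Fin m) ℝ) (μ : ℝ) : Prop :=
  ∃ v : Fin m → ℝ, A *ᵥ v = μ • v ∧ v ⬝ᵥ (fun _ => (1 : ℝ)) ≠ 0

/-!
Extending an eigenvector of `G_i` by zero to the other blocks gives an eigenvector of the
`H`-join for the same eigenvalue as soon as its entries sum to zero: inside block `i` the join
is `G_i`, and a vertex outside block `i` is adjacent to all of block `i` or to none of it.
Hence the `μ`-eigenspace of the join contains an injective image of the kernel of the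
sum functional on the `μ`-eigenspace of `G_i`. That kernel is the whole eigenspace when `μ`
is not main, and has codimension one when it is.
-/

section ExtendByZero

variable (R : Type*) [CommSemiring R] {ι : Type*} [DecidableEq ι] {κ : ι → Type*}

def extendByZero (i : ι) : (κ i → R) →ₗ[R] ((Σ j, κ j) → R) :=
  (LinearEquiv.piCurry R fun _ _ => R).symm.toLinearMap ∘ₗ
    LinearMap.single R (fun j => κ j → R) i

variable {R}

@[simp]
lemma extendByZero_apply (i : ι) (v : κ i → R) (x : Σ j, κ j) :
    extendByZero R i v x = Pi.single (M := fun j => κ j → R) i v x.1 x.2 :=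
  rfl

lemma extendByZero_injective (i : ι) : Function.Injective (extendByZero R (κ := κ) i) := by
  intro u v h
  funext c
  simpa using congrFun h ⟨i, c⟩

lemma mulVec_extendByZero [Fintype ι] [∀ j, Fintype (κ j)] {m : Type*}
    (A : Matrix m (Σ j, κ j) R) (i : ι) (v : κ i → R) (x : m) :
    (A *ᵥ extendByZero R i v) x = ∑ c, A x ⟨i, c⟩ * v c := by
  rw [mulVec, dotProduct, Fintype.sum_sigma, Finset.sum_eq_single i]
  · simp
  · intro j _ hj
    simp [Pi.single_eq_of_ne hj]
  · simp

end ExtendByZero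

lemma Module.Dual.finrank_sub_one_le_finrank_ker {K V : Type*} [Field K] [AddCommGroup V]
    [Module K V] [FiniteDimensional K V] (f : Module.Dual K V) :
    Module.finrank K V - 1 ≤ Module.finrank K (LinearMap.ker f) := by
  by_cases hf : f = 0
  · rw [hf, LinearMap.ker_zero, finrank_top]
    exact Nat.sub_le _ _
  · rw [← Module.Dual.finrank_ker_add_one_of_ne_zero hf]
    simp

namespace Matrix

variable {ι : Type*} [Fintype ι]

def eigenspaceSum (A : Matrix ι ι ℝ) (μ : ℝ) :
    Module.Dual ℝ (Module.End.eigenspace (mulVecLin A) μ) :=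
  ((dotProductBilin ℝ ℝ).flip 1).domRestrict _

lemma eigenspaceSum_eq_zero_of_not_isMainEig {m : ℕ} {A : Matrix (Fin m) (Fin m) ℝ} {μ : ℝ}
    (hμ : ¬ A.IsMainEig μ) : eigenspaceSum A μ = 0 := by
  ext v
  by_contra hv
  exact hμ ⟨v, Module.End.mem_eigenspace_iff.mp v.2, hv⟩

end Matrix

namespace SimpleGraph

variable {p : ℕ} (H : SimpleGraph (Fin p)) {n : Fin p → ℕ}
  (G : ∀ i, SimpleGraph (Fin (n i)))

@[simp]
lemma hJoin_adj_same {i : Fin p} {a b : Fin (n i)} :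
    (H.hJoin n G).Adj ⟨i, a⟩ ⟨i, b⟩ ↔ (G i).Adj a b := by
  simp [hJoin]

lemma hJoin_adj_of_ne {i j : Fin p} (h : j ≠ i) (a : Fin (n j)) (b : Fin (n i)) :
    (H.hJoin n G).Adj ⟨j, a⟩ ⟨i, b⟩ ↔ H.Adj j i := by
  simp [hJoin, h]

variable [∀ i, DecidableRel (G i).Adj]

lemma hJoin_adjMatrix_mulVec_extendByZero {i : Fin p} {μ : ℝ} {v : Fin (n i) → ℝ}
    (hv : (G i).adjMatrix ℝ *ᵥ v = μ • v) (hsum : v ⬝ᵥ 1 = 0) :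
    (H.hJoin n G).adjMatrix ℝ *ᵥ extendByZero ℝ i v = μ • extendByZero ℝ i v := by
  funext ⟨j, b⟩
  rw [mulVec_extendByZero]
  by_cases hj : j = i
  · subst hj
    simp only [Pi.smul_apply, extendByZero_apply, Pi.single_eq_same, adjMatrix_apply,
      hJoin_adj_same]
    exact congrFun hv b
  · classical
    simp only [Pi.smul_apply, extendByZero_apply, Pi.single_eq_of_ne hj, adjMatrix_apply,
      hJoin_adj_of_ne H G hj]
    rw [← Finset.mul_sum, ← dotProduct_one, hsum, mul_zero, Pi.zero_apply, smul_zero]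

lemma finrank_ker_eigenspaceSum_le (i : Fin p) (μ : ℝ) :
    Module.finrank ℝ (LinearMap.ker (eigenspaceSum ((G i).adjMatrix ℝ) μ)) ≤
      Module.finrank ℝ
        (Module.End.eigenspace (mulVecLin ((H.hJoin n G).adjMatrix ℝ)) μ) := by
  let extend := extendByZero ℝ (κ := fun j => Fin (n j)) i ∘ₗ
    (Module.End.eigenspace (mulVecLin ((G i).adjMatrix ℝ)) μ).subtype ∘ₗ
    (LinearMap.ker (eigenspaceSum ((G i).adjMatrix ℝ) μ)).subtype
  refine LinearMap.finrank_le_finrank_of_injective (f := extend.codRestrict _ fun v => ?_) ?_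
  · have hv := Module.End.mem_eigenspace_iff.mp v.1.2
    rw [Module.End.mem_eigenspace_iff, mulVecLin_apply]
    exact hJoin_adjMatrix_mulVec_extendByZero H G hv (LinearMap.mem_ker.mp v.2)
  · intro u v h
    exact Subtype.ext <| Subtype.ext <| extendByZero_injective i (congrArg Subtype.val h)

end SimpleGraph

/-- In the `H`-join `G` of `G_1, …, G_p`: a non-main eigenvalue of `G_i` of
multiplicity `m` is an eigenvalue of `G` of multiplicity at least `m`, and a main
eigenvalue of `G_i` of multiplicity `m` is an eigenvalue of `G` of multiplicity at
least `m - 1`. -/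
theorem hJoin_eigenvalue_multiplicity {p : ℕ} (H : SimpleGraph (Fin p))
    (n : Fin p → ℕ) (G : ∀ i, SimpleGraph (Fin (n i))) [∀ i, DecidableRel (G i).Adj]
    (i : Fin p) (μ : ℝ) (m : ℕ)
    (hm : m = Module.finrank ℝ
      (Module.End.eigenspace (Matrix.mulVecLin ((G i).adjMatrix ℝ)) μ)) :
    (¬ ((G i).adjMatrix ℝ).IsMainEig μ →
        m ≤ Module.finrank ℝ
          (Module.End.eigenspace (Matrix.mulVecLin ((H.hJoin n G).adjMatrix ℝ)) μ)) ∧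
    (((G i).adjMatrix ℝ).IsMainEig μ →
        m - 1 ≤ Module.finrank ℝ
          (Module.End.eigenspace (Matrix.mulVecLin ((H.hJoin n G).adjMatrix ℝ)) μ)) := by
  have hker := H.finrank_ker_eigenspaceSum_le G i μ
  subst hm
  refine ⟨fun hμ => ?_, fun _ => (Module.Dual.finrank_sub_one_le_finrank_ker _).trans hker⟩
  rwa [eigenspaceSum_eq_zero_of_not_isMainEig hμ, LinearMap.ker_zero, finrank_top] at hker
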